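/- The preferred semantics is normal: A is a maximal admissible set of AF if and only if A = ⋃_i A_i where each A_i is a maximal admissible set of the i-th maximal connected component of AF. -/
import Mathlib


/-- Attackers of a set `A` within the framework `(S, E)`: `E⁻(A)`. -/
def attackersOf {α : Type*} (S : Set α) (E : Set (α × α)) (A : Set α) : Set α :=
  {y ∈ S | ∃ x ∈ A, (y, x) ∈ E}

/-- Arguments attacked by a set `A` within the framework `(S, E)`: `E⁺(A)`. -/
def attackedBy {α : Type*} (S : Set α) (E : Set (α × α)) (A : Set α) : Set α :=
  {y ∈ S | ∃ x ∈ A, (x, y) ∈ E}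

/-- `A` is admissible in the argumentation framework `(S, E)`:
`A ⊆ S` and `E⁻(A) ⊆ E⁺(A) ⊆ S \ A`. -/
def IsAdmissible {α : Type*} (S : Set α) (E : Set (α × α)) (A : Set α) : Prop :=
  A ⊆ S ∧ attackersOf S E A ⊆ attackedBy S E A ∧ attackedBy S E A ⊆ S \ A

/-- `A` is preferred (maximal admissible) in `(S, E)`. -/
def IsPreferred {α : Type*} (S : Set α) (E : Set (α × α)) (A : Set α) : Prop :=
  IsAdmissible S E A ∧ ∀ B, IsAdmissible S E B → A ⊆ B → A = B

/-- The symmetrization of the attack relation `E`, restricted to `S`. -/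
def undirected {α : Type*} (E : Set (α × α)) (S : Set α) (u v : α) : Prop :=
  u ∈ S ∧ v ∈ S ∧ ((u, v) ∈ E ∨ (v, u) ∈ E)

/-- The connected component of `x` in `(S, E)`. -/
def comp {α : Type*} (S : Set α) (E : Set (α × α)) (x : α) : Set α :=
  {y ∈ S | Relation.EqvGen (undirected E S) x y}

/-- The maximal connected components of `(S, E)`. -/
def components {α : Type*} (S : Set α) (E : Set (α × α)) : Set (Set α) :=
  {C | ∃ x ∈ S, C = comp S E x}

/-- Restriction of an attack relation to a set of arguments: `E ∩ (C × C)`. -/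
def restrict {α : Type*} (E : Set (α × α)) (C : Set α) : Set (α × α) :=
  {e ∈ E | e.1 ∈ C ∧ e.2 ∈ C}

/-- The set of complete assents (possible consensuses) for a basis `V`. -/
def Cons {α A : Type*} (V : A → Set (α × α)) : Set (Set (α × α)) :=
  {F | (⋂ a, V a) ⊆ F ∧ F ⊆ ⋃ a, V a}

/-- States of the deliberative Kripke model induced by the basis `V`. -/
def IsState {α A : Type*} (V : A → Set (α × α)) (q : Set α × Set (α × α)) : Prop :=
  (⋂ a, restrict (V a) q.1) ⊆ q.2 ∧ q.2 ⊆ ⋃ a, restrict (V a) q.1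

/-- The `p`-update (deliberative event) relation between states. -/
def Step {α A : Type*} (V : A → Set (α × α)) (p : α)
    (q q' : Set α × Set (α × α)) : Prop :=
  q'.1 = q.1 ∪ {p} ∧ ∃ X, (⋂ a, restrict (V a) (q.1 ∪ {p})) ⊆ X ∧
    X ⊆ (⋃ a, restrict (V a) (q.1 ∪ {p})) ∧ q'.2 = q.2 ∪ X

/-- The `n`-vicinity `D(V, Φ, n)` of a set of arguments `Φ`, w.r.t. `U = ⋃ a, V a`. -/
def vicinity {α : Type*} (U : Set (α × α)) (Φ : Set α) : ℕ → Set α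
  | 0 => Φ
  | n + 1 => vicinity U Φ n ∪ {p | ∃ q ∈ vicinity U Φ n, (p, q) ∈ U ∨ (q, p) ∈ U}

/-- Undirected adjacency for an attack relation. -/
def undirEdge {α : Type*} (E : Set (α × α)) (u v : α) : Prop :=
  (u, v) ∈ E ∨ (v, u) ∈ E

/-- Path-based `n`-vicinity: arguments connected to `Φ` by an undirected path
with at most `n + 1` nodes. -/
def pathVicinity {α : Type*} (E : Set (α × α)) (Φ : Set α) (n : ℕ) : Set α :=
  {x | ∃ l : List α, ∃ h : l ≠ [], l.length ≤ n + 1 ∧ l.head h = x ∧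
    l.getLast h ∈ Φ ∧ l.Chain' (undirEdge E)}

/-- Formulas of three-valued Łukasiewicz logic over atoms `α`. -/
inductive LForm (α : Type*) where
  | atom : α → LForm α
  | lneg : LForm α → LForm α
  | limp : LForm α → LForm α → LForm α

/-- Three-valued Łukasiewicz valuation of a formula. -/
def lval {α : Type*} (v : α → ℚ) : LForm α → ℚ
  | .atom p => v p
  | .lneg a => 1 - lval v a
  | .limp a b => min 1 (1 - (lval v a - lval v b))

/-- Atoms of a Łukasiewicz formula. -/
def LForm.atoms {α : Type*} : LForm α → Set α
  | .atom p => {p}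
  | .lneg a => a.atoms
  | .limp a b => a.atoms ∪ b.atoms

/-- Formulas of deliberative dynamic logic. -/
inductive DForm (α : Type*) where
  | cdia : LForm α → DForm α
  | dneg : DForm α → DForm α
  | dand : DForm α → DForm α → DForm α
  | ddia : α → DForm α → DForm α
  | edia : DForm α → DForm α

/-- Atoms occurring inside `◆`-subformulas. -/
def DForm.watoms {α : Type*} : DForm α → Set α
  | .cdia a => a.atoms
  | .dneg f => f.watoms
  | .dand f g => f.watoms ∪ g.watoms
  | .ddia _ f => f.watoms
  | .edia f => f.watoms

/-- White modal depth of a formula. -/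
def DForm.wd {α : Type*} : DForm α → ℕ
  | .cdia _ => 0
  | .dneg f => f.wd
  | .dand f g => max f.wd g.wd
  | .ddia _ f => 1 + f.wd
  | .edia f => 1 + f.wd

open Classical in
/-- The three-valued labelling induced by an extension `ext` of the AF encoded
by the state `q`: `1` on the extension, `0` on arguments of `q` attacked by the
extension, `1/2` otherwise. -/
noncomputable def stateVal {α : Type*} (q : Set α × Set (α × α)) (ext : Set α) (p : α) : ℚ :=
  if p ∈ ext then 1 else if p ∈ q.1 ∧ ∃ x ∈ ext, (x, p) ∈ q.2 then 0 else 1/2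

/-- Satisfaction of deliberative dynamic logic formulas on the deliberative
Kripke model induced by the basis `V` and semantics `σ`. -/
def Sat {α A : Type*} (V : A → Set (α × α)) (σ : Set α → Set (α × α) → Set (Set α)) :
    DForm α → Set α × Set (α × α) → Prop
  | .cdia a, q => ∃ ext ∈ σ q.1 q.2, lval (stateVal q ext) a = 1
  | .dneg f, q => ¬ Sat V σ f q
  | .dand f g, q => Sat V σ f q ∧ Sat V σ g q
  | .ddia p f, q => ∃ q', Step V p q q' ∧ Sat V σ f q'
  | .edia f, q => ∃ p q', Step V p q q' ∧ Sat V σ f q'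

/-- `C(q, Φ)`: the sub-framework consisting of the connected components of the
AF `q` which meet `Φ`. -/
def compUnion {α : Type*} (S : Set α) (E : Set (α × α)) (Φ : Set α) :
    Set α × Set (α × α) :=
  ({y ∈ S | ∃ φ ∈ Φ, Relation.EqvGen (undirected E S) y φ},
   restrict E {y ∈ S | ∃ φ ∈ Φ, Relation.EqvGen (undirected E S) y φ})

/-- A semantics is normal if extensions are exactly unions of one extension per
maximal connected component. -/
def NormalSem {α : Type*} (σ : Set α → Set (α × α) → Set (Set α)) : Prop :=
  ∀ S E A, A ∈ σ S E ↔ ∃ f : Set α → Set α,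
    (∀ C ∈ components S E, f C ∈ σ C (restrict E C)) ∧
    A = ⋃ C ∈ components S E, f C

/-- `n`-bisimilarity modulo `Φ` between states of the deliberative Kripke models
induced by bases `V` and `V'`. -/
def NBisim {α A B : Type*} (V : A → Set (α × α)) (V' : B → Set (α × α))
    (n : ℕ) (Φ : Set α) (q q' : Set α × Set (α × α)) : Prop :=
  ∃ Z : ℕ → (Set α × Set (α × α)) → (Set α × Set (α × α)) → Prop,
    (∀ i v v', Z (i + 1) v v' → Z i v v') ∧
    Z n q q' ∧
    (∀ v v', Z 0 v v' → compUnion v.1 v.2 Φ = compUnion v'.1 v'.2 Φ) ∧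
    (∀ i p v v' u, Z (i + 1) v v' → Step V p v u →
      ∃ u', Step V' p v' u' ∧ Z i u u') ∧
    (∀ i p v v' u', Z (i + 1) v v' → Step V' p v' u' →
      ∃ u, Step V p v u ∧ Z i u u')


section PrefNormalAux
variable {α : Type*} {S : Set α} {E : Set (α × α)}

private lemma mem_comp_self {x : α} (hx : x ∈ S) : x ∈ comp S E x :=
  ⟨hx, Relation.EqvGen.refl x⟩

private lemma comp_subset (x : α) : comp S E x ⊆ S := fun _ hy => hy.1

private lemma comp_eq_of_mem {x y : α} (hy : y ∈ comp S E x) :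
    comp S E x = comp S E y := by
  ext z
  constructor
  · rintro ⟨hz, h⟩
    exact ⟨hz, (Relation.EqvGen.symm _ _ hy.2).trans _ _ _ h⟩
  · rintro ⟨hz, h⟩
    exact ⟨hz, hy.2.trans _ _ _ h⟩

private lemma edge_mem_comp {u v : α} (hu : u ∈ S) (hv : v ∈ S)
    (h : (u, v) ∈ E ∨ (v, u) ∈ E) : v ∈ comp S E u :=
  ⟨hv, Relation.EqvGen.rel _ _ ⟨hu, hv, h⟩⟩

private lemma attacked_local {A : Set α} (hA : A ⊆ S) {y : α}
    (h : y ∈ attackedBy S E A) :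
    y ∈ attackedBy (comp S E y) (restrict E (comp S E y)) (A ∩ comp S E y) := by
  obtain ⟨hyS, x, hxA, hE⟩ := h
  have hxS := hA hxA
  have hx : x ∈ comp S E y := edge_mem_comp hyS hxS (Or.inr hE)
  exact ⟨mem_comp_self hyS, x, ⟨hxA, hx⟩, hE, hx, mem_comp_self hyS⟩

private lemma attackers_local {A : Set α} (hA : A ⊆ S) {y : α}
    (h : y ∈ attackersOf S E A) :
    y ∈ attackersOf (comp S E y) (restrict E (comp S E y)) (A ∩ comp S E y) := by
  obtain ⟨hyS, x, hxA, hE⟩ := h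
  have hxS := hA hxA
  have hx : x ∈ comp S E y := edge_mem_comp hyS hxS (Or.inl hE)
  exact ⟨mem_comp_self hyS, x, ⟨hxA, hx⟩, hE, mem_comp_self hyS, hx⟩

private lemma attacked_global {C : Set α} (hC : C ⊆ S) {B A : Set α}
    (hBA : B ⊆ A) : attackedBy C (restrict E C) B ⊆ attackedBy S E A := by
  rintro y ⟨hyC, x, hxB, hE, -⟩
  exact ⟨hC hyC, x, hBA hxB, hE⟩

private lemma attackers_global {C : Set α} (hC : C ⊆ S) {B A : Set α}
    (hBA : B ⊆ A) : attackersOf C (restrict E C) B ⊆ attackersOf S E A := by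
  rintro y ⟨hyC, x, hxB, hE, -⟩
  exact ⟨hC hyC, x, hBA hxB, hE⟩

private lemma adm_iff {A : Set α} (hA : A ⊆ S) :
    IsAdmissible S E A ↔
      ∀ C ∈ components S E, IsAdmissible C (restrict E C) (A ∩ C) := by
  constructor
  · rintro ⟨-, h1, h2⟩ C ⟨x₀, hx₀, rfl⟩
    refine ⟨Set.inter_subset_right, ?_, ?_⟩
    · intro y hy
      have hyg : y ∈ attackersOf S E A :=
        attackers_global (comp_subset x₀) Set.inter_subset_left hy
      obtain ⟨hyS, x, hxA, hE⟩ := h1 hyg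
      have hyC : y ∈ comp S E x₀ := hy.1
      have hxC : x ∈ comp S E x₀ := by
        rw [comp_eq_of_mem hyC]
        exact edge_mem_comp hyS (hA hxA) (Or.inr hE)
      exact ⟨hyC, x, ⟨hxA, hxC⟩, hE, hxC, hyC⟩
    · intro y hy
      have hyg : y ∈ attackedBy S E A :=
        attacked_global (comp_subset x₀) Set.inter_subset_left hy
      exact ⟨hy.1, fun hyAC => (h2 hyg).2 hyAC.1⟩
  · intro h
    refine ⟨hA, ?_, ?_⟩
    · intro y hy
      have hC : comp S E y ∈ components S E := ⟨y, hy.1, rfl⟩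
      have := (h _ hC).2.1 (attackers_local hA hy)
      exact attacked_global (comp_subset y) Set.inter_subset_left this
    · intro y hy
      have hC : comp S E y ∈ components S E := ⟨y, hy.1, rfl⟩
      have h3 := (h _ hC).2.2 (attacked_local hA hy)
      exact ⟨hy.1, fun hyA => h3.2 ⟨hyA, mem_comp_self hy.1⟩⟩

private lemma comp_eq_of_common {x x' y : α} (h : y ∈ comp S E x)
    (h' : y ∈ comp S E x') : comp S E x = comp S E x' :=
  (comp_eq_of_mem h).trans (comp_eq_of_mem h').symm

private lemma union_inter {A : Set α} (hA : A ⊆ S) :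
    A = ⋃ C ∈ components S E, A ∩ C := by
  ext x
  simp only [Set.mem_iUnion, Set.mem_inter_iff]
  constructor
  · intro hx
    exact ⟨comp S E x, ⟨x, hA hx, rfl⟩, hx, mem_comp_self (hA hx)⟩
  · rintro ⟨C, -, hx, -⟩
    exact hx

end PrefNormalAux

/-- The preferred semantics is normal: `A` is a maximal admissible
set of `(S, E)` iff `A` is a union of one preferred set per maximal connected
component. -/
theorem preferred_normal {α : Type*} (S : Set α) (E : Set (α × α)) (A : Set α) :
    IsPreferred S E A ↔ ∃ f : Set α → Set α,
      (∀ C ∈ components S E, IsPreferred C (restrict E C) (f C)) ∧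
      A = ⋃ C ∈ components S E, f C := by
  constructor
  · rintro ⟨hadm, hmax⟩
    have hA : A ⊆ S := hadm.1
    refine ⟨fun C => A ∩ C, ?_, union_inter hA⟩
    rintro C hC
    obtain ⟨x₀, hx₀, rfl⟩ := hC
    refine ⟨(adm_iff hA).1 hadm _ ⟨x₀, hx₀, rfl⟩, ?_⟩
    intro B hB hAB
    have hBC : B ⊆ comp S E x₀ := hB.1
    set C := comp S E x₀ with hCdef
    set A' := (A \ C) ∪ B with hA'def
    have hA'S : A' ⊆ S := by
      rintro x (hx | hx)
      · exact hA hx.1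
      · exact comp_subset x₀ (hBC hx)
    have hkey : ∀ C' ∈ components S E, IsAdmissible C' (restrict E C') (A' ∩ C') := by
      rintro C' hC'
      by_cases hCC : C' = C
      · rw [hCC]
        have : A' ∩ C = B := by
          ext z
          constructor
          · rintro ⟨hz | hz, hzC⟩
            · exact absurd hzC hz.2
            · exact hz
          · intro hz
            exact ⟨Or.inr hz, hBC hz⟩
        rw [this]
        exact hB
      · obtain ⟨x₁, hx₁, rfl⟩ := hC'
        have hdisj : ∀ z, z ∈ comp S E x₁ → z ∉ C := by
          intro z hz hzC
          exact hCC (comp_eq_of_common hz hzC)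
        have : A' ∩ comp S E x₁ = A ∩ comp S E x₁ := by
          ext z
          constructor
          · rintro ⟨hz | hz, hzC⟩
            · exact ⟨hz.1, hzC⟩
            · exact absurd (hBC hz) (hdisj z hzC)
          · rintro ⟨hz, hzC⟩
            exact ⟨Or.inl ⟨hz, hdisj z hzC⟩, hzC⟩
        rw [this]
        exact (adm_iff hA).1 hadm _ ⟨x₁, hx₁, rfl⟩
    have hadm' : IsAdmissible S E A' := (adm_iff hA'S).2 hkey
    have hAA' : A ⊆ A' := by
      intro x hx
      by_cases hxC : x ∈ C
      · exact Or.inr (hAB ⟨hx, hxC⟩)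
      · exact Or.inl ⟨hx, hxC⟩
    have hEq : A = A' := hmax A' hadm' hAA'
    apply Set.Subset.antisymm hAB
    intro z hz
    have : z ∈ A := hEq ▸ (Or.inr hz : z ∈ A')
    exact ⟨this, hBC hz⟩
  · rintro ⟨f, hf, rfl⟩
    have hA : (⋃ C ∈ components S E, f C) ⊆ S := by
      rintro x hx
      simp only [Set.mem_iUnion] at hx
      obtain ⟨C, hC, hx⟩ := hx
      obtain ⟨x₀, hx₀, rfl⟩ := hC
      exact comp_subset x₀ ((hf _ ⟨x₀, hx₀, rfl⟩).1.1 hx)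
    have hinter : ∀ C ∈ components S E, (⋃ C' ∈ components S E, f C') ∩ C = f C := by
      rintro C hC
      obtain ⟨x₀, hx₀, rfl⟩ := hC
      ext z
      simp only [Set.mem_inter_iff, Set.mem_iUnion]
      constructor
      · rintro ⟨⟨C', hC', hz⟩, hzC⟩
        obtain ⟨x₁, hx₁, rfl⟩ := hC'
        have hz1 : z ∈ comp S E x₁ := (hf _ ⟨x₁, hx₁, rfl⟩).1.1 hz
        have : comp S E x₁ = comp S E x₀ := comp_eq_of_common hz1 hzC
        rwa [this] at hz
      · intro hz
        exact ⟨⟨_, ⟨x₀, hx₀, rfl⟩, hz⟩, (hf _ ⟨x₀, hx₀, rfl⟩).1.1 hz⟩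
    have hadm : IsAdmissible S E (⋃ C ∈ components S E, f C) := by
      refine (adm_iff hA).2 ?_
      intro C hC
      rw [hinter C hC]
      exact (hf C hC).1
    refine ⟨hadm, ?_⟩
    intro B hB hAB
    have hBS : B ⊆ S := hB.1
    have heq : ∀ C ∈ components S E, f C = B ∩ C := by
      intro C hC
      refine (hf C hC).2 (B ∩ C) ((adm_iff hBS).1 hB C hC) ?_
      intro z hz
      exact ⟨hAB (Set.mem_biUnion hC hz), (hf C hC).1.1 hz⟩
    calc (⋃ C ∈ components S E, f C) = ⋃ C ∈ components S E, B ∩ C := by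
          apply Set.iUnion₂_congr heq
      _ = B := (union_inter hBS).symm
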